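/- In a simplicial abelian group of the form DK(Y), the subgroup D of degenerate simplices is a flat cleavage for the projection to the point: if w ∈ D_{n+1} satisfies s_k(w) ∈ D_k for all k > 0 and d_i(w) ∈ D_n for all i > 0, then d_0(w) ∈ D_n. -/

import Mathlib

open CategoryTheory SimplexCategory

variable (Y : ℕ → Type) [∀ k, AddCommGroup (Y k)]

/-- Indices of the DK direct sum: injective order-preserving maps `[k] → [n]` with `α 0 = 0`. -/
def DKIdx (n : ℕ) : Type :=
  {p : Σ k : ℕ, SimplexCategory.mk k ⟶ SimplexCategory.mk n //
    Function.Injective p.2.toOrderHom ∧ p.2.toOrderHom 0 = 0}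

/-- The `n`-simplex abelian group `DK(Y)_n = ⊕_α Y_k`. -/
def DK (n : ℕ) : Type := ∀ p : DKIdx n, Y p.1.1

instance (n : ℕ) : AddCommGroup (DK Y n) :=
  inferInstanceAs (AddCommGroup (∀ p : DKIdx n, Y p.1.1))

/-- Projection `π_γ`, with the convention `π_γ = 0` for `γ` not injective (or not 0-preserving). -/
def DKproj {n l : ℕ} (γ : SimplexCategory.mk l ⟶ SimplexCategory.mk n) (x : DK Y n) : Y l :=
  if h : Function.Injective γ.toOrderHom ∧ γ.toOrderHom 0 = 0 then x ⟨⟨l, γ⟩, h⟩ else 0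

/-- Pullback `θ^*` along an order map, defined by `π_β θ^* = π_{θ∘β}`. -/
def DKpull {m n : ℕ} (θ : SimplexCategory.mk m ⟶ SimplexCategory.mk n) (x : DK Y n) : DK Y m :=
  fun p => DKproj Y (p.1.2 ≫ θ) x

/-- The map `θ' : [m+1] → [n+1]`, `θ'(0)=0`, `θ'(i+1)=θ(i)+1`, on monotone maps. -/
def primeFun {m n : ℕ} (θ : Fin (m + 1) →o Fin (n + 1)) : Fin (m + 2) →o Fin (n + 2) where
  toFun i := if h : (i : ℕ) = 0 then 0 else
    ⟨((θ ⟨(i : ℕ) - 1, by have := i.isLt; omega⟩ : Fin (n + 1)) : ℕ) + 1, by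
      have := (θ ⟨(i : ℕ) - 1, by have := i.isLt; omega⟩).isLt; omega⟩
  monotone' := by
    intro a b hab
    dsimp only
    by_cases ha : (a : ℕ) = 0
    · by_cases hb : (b : ℕ) = 0 <;> simp [ha, hb, Fin.le_def]
    · have hb : (b : ℕ) ≠ 0 := by have := Fin.le_def.mp hab; omega
      rw [dif_neg ha, dif_neg hb]
      have h2 : (⟨(a : ℕ) - 1, by have := a.isLt; omega⟩ : Fin (m + 1)) ≤
          ⟨(b : ℕ) - 1, by have := b.isLt; omega⟩ := by
        have := Fin.le_def.mp hab; simp [Fin.le_def]; omega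
      have := θ.monotone h2
      simp only [Fin.le_def] at this ⊢
      omega

/-- The map `θ' : [m+1] ⟶ [n+1]` in the simplex category. -/
def DKprime {m n : ℕ} (θ : SimplexCategory.mk m ⟶ SimplexCategory.mk n) :
    SimplexCategory.mk (m + 1) ⟶ SimplexCategory.mk (n + 1) :=
  SimplexCategory.mkHom (primeFun θ.toOrderHom)

/-- The zeroth face of `DK(Y)`:
`π_β d_0 = ∂ π_{β'} − Σ_{i=1}^{l+1} (−1)^i π_{β' δ_i}`. -/
def DKd0 (D : ∀ k, Y (k + 1) →+ Y k) {n : ℕ} (x : DK Y (n + 1)) : DK Y n :=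
  fun p =>
    D p.1.1 (DKproj Y (DKprime p.1.2) x) -
      ∑ j : Fin (p.1.1 + 1), ((-1 : ℤ) ^ ((j : ℕ) + 1)) •
        DKproj Y (SimplexCategory.δ j.succ ≫ DKprime p.1.2) x

/-- The degeneracy `u_j` of `DK(Y)`, `π_β u_j = π_{υ_j β}`. -/
def DKu {n : ℕ} (j : Fin (n + 1)) (x : DK Y n) : DK Y (n + 1) :=
  DKpull Y (SimplexCategory.σ j) x

/-- The subgroup spanned by the degenerate simplices. -/
def Dsub : ∀ n, AddSubgroup (DK Y n)
  | 0 => ⊥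
  | (n + 1) => AddSubgroup.closure (⋃ j : Fin (n + 1), Set.range (DKu Y j))

/-- The initial inclusion `σ_k : [k] → [n]`. -/
def initialIncl (k n : ℕ) (h : k ≤ n) : SimplexCategory.mk k ⟶ SimplexCategory.mk n :=
  SimplexCategory.mkHom
    ⟨fun i => ⟨(i : ℕ), by have := i.isLt; omega⟩,
     fun a b hab => by simp only [Fin.le_def] at hab ⊢; omega⟩

/-- The final inclusion `τ_k : [k] → [n]`, `i ↦ i + (n − k)`. -/
def finalIncl (k n : ℕ) (h : k ≤ n) : SimplexCategory.mk k ⟶ SimplexCategory.mk n :=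
  SimplexCategory.mkHom
    ⟨fun i => ⟨(i : ℕ) + (n - k), by have := i.isLt; omega⟩,
     fun a b hab => by simp only [Fin.le_def] at hab ⊢; omega⟩


/-!
A simplex of `DK(Y)` is degenerate exactly when its component at the identity index vanishes:
degeneracies `u_j` are pulled back along non-injective maps, so have no such component, and
conversely a simplex `x` vanishing on all indices whose image contains `0, …, m + 1` differs
from the degenerate simplex `u_m δ_{m+1}^* x` by one vanishing on all indices whose image
contains `0, …, m`. The identity component of `d_0 w` only involves the identity components of `w`
and of its faces `d_i w`, `i > 0`, whence the theorem.
-/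

section

variable {Y}

abbrev DKIdx.id (n : ℕ) : DKIdx n := ⟨⟨n, 𝟙 _⟩, fun _ _ h => h, rfl⟩

def DKIdx.CoversUpTo {n : ℕ} (p : DKIdx n) (m : ℕ) : Prop :=
  ∀ t : Fin (n + 1), (t : ℕ) ≤ m → t ∈ Set.range p.1.2.toOrderHom

lemma DKIdx.eq_id_of_surjective {n : ℕ} (p : DKIdx n)
    (hp : Function.Surjective p.1.2.toOrderHom) : p = DKIdx.id n := by
  obtain ⟨⟨k, β⟩, hβ⟩ := p
  have : Mono β := mono_iff_injective.mpr hβ.1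
  have : Epi β := SimplexCategory.epi_iff_surjective.mpr hp
  obtain rfl : k = n := by simpa using le_antisymm (len_le_of_mono β) (len_le_of_epi β)
  obtain rfl := eq_id_of_mono β
  rfl

lemma DKproj_idx {n : ℕ} (p : DKIdx n) (x : DK Y n) : DKproj Y p.1.2 x = x p :=
  dif_pos p.2

lemma DKproj_of_not_injective {n l : ℕ} {γ : mk l ⟶ mk n}
    (hγ : ¬Function.Injective γ.toOrderHom) (x : DK Y n) : DKproj Y γ x = 0 :=
  dif_neg fun h => hγ h.1

lemma DKu_apply_of_mem_range {n : ℕ} (j : Fin (n + 1)) (x : DK Y n) (p : DKIdx (n + 1))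
    (hcast : j.castSucc ∈ Set.range p.1.2.toOrderHom)
    (hsucc : j.succ ∈ Set.range p.1.2.toOrderHom) : DKu Y j x p = 0 := by
  obtain ⟨a, ha⟩ := hcast
  obtain ⟨b, hb⟩ := hsucc
  refine DKproj_of_not_injective (fun hinj => ?_) x
  have hab : a = b := hinj <| by
    change j.predAbove (p.1.2.toOrderHom a) = j.predAbove (p.1.2.toOrderHom b)
    rw [ha, hb, Fin.predAbove_castSucc_self, Fin.predAbove_succ_self]
  exact Fin.castSucc_lt_succ.ne (ha.symm.trans (hab ▸ hb))

lemma DKu_apply_id {n : ℕ} (j : Fin (n + 1)) (x : DK Y n) : DKu Y j x (DKIdx.id (n + 1)) = 0 :=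
  DKu_apply_of_mem_range j x _ ⟨j.castSucc, rfl⟩ ⟨j.succ, rfl⟩

lemma DKu_DKpull_δ_apply_of_not_mem_range {n : ℕ} (j : Fin (n + 1)) (x : DK Y (n + 1))
    (p : DKIdx (n + 1)) (hsucc : j.succ ∉ Set.range p.1.2.toOrderHom) :
    DKu Y j (DKpull Y (δ j.succ) x) p = x p := by
  obtain ⟨g, hg⟩ := eq_comp_δ_of_not_surjective' p.1.2 j.succ fun a ha => hsucc ⟨a, ha⟩
  have hpg : p.1.2 ≫ σ j = g := by rw [hg, Category.assoc, δ_comp_σ_succ, Category.comp_id]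
  have hg_inj : Function.Injective g.toOrderHom := fun a b hab => p.2.1 <| by
    rw [hg]
    exact congrArg (δ j.succ).toOrderHom hab
  have hg_zero : g.toOrderHom 0 = 0 := by
    have := p.2.2
    rw [hg] at this
    exact (Fin.succAbove_eq_zero_iff (Fin.succ_ne_zero j)).mp this
  change DKproj Y (p.1.2 ≫ σ j) (DKpull Y (δ j.succ) x) = x p
  rw [hpg, DKproj, dif_pos ⟨hg_inj, hg_zero⟩]
  change DKproj Y (g ≫ δ j.succ) x = x p
  rw [← hg, DKproj_idx]

lemma apply_id_eq_zero_of_mem_Dsub {n : ℕ} {x : DK Y n} (hx : x ∈ Dsub Y n) :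
    x (DKIdx.id n) = 0 := by
  cases n with
  | zero => rw [AddSubgroup.mem_bot.mp hx]; rfl
  | succ n =>
    suffices Dsub Y (n + 1) ≤ (Pi.evalAddMonoidHom (fun p : DKIdx (n + 1) => Y p.1.1)
        (DKIdx.id (n + 1))).ker from this hx
    refine AddSubgroup.closure_le _ |>.mpr fun y hy => ?_
    obtain ⟨j, z, rfl⟩ := Set.mem_iUnion.mp hy
    exact DKu_apply_id j z

lemma mem_Dsub_of_forall_coversUpTo {N : ℕ} (m : ℕ) (hm : m ≤ N) (x : DK Y N)
    (hx : ∀ p : DKIdx N, p.CoversUpTo m → x p = 0) : x ∈ Dsub Y N := by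
  induction m generalizing x with
  | zero =>
    obtain rfl : x = 0 := funext fun p =>
      hx p fun t ht => ⟨0, p.2.2.trans (Fin.ext (Nat.le_zero.mp ht).symm)⟩
    exact zero_mem _
  | succ m ih =>
    obtain ⟨n, rfl⟩ : ∃ n, N = n + 1 := ⟨N - 1, by omega⟩
    set j : Fin (n + 1) := ⟨m, by omega⟩
    set y := DKu Y j (DKpull Y (δ j.succ) x) with hy_def
    have hy : y ∈ Dsub Y (n + 1) :=
      AddSubgroup.subset_closure (Set.mem_iUnion.mpr ⟨j, Set.mem_range_self _⟩)
    have hxy : x - y ∈ Dsub Y (n + 1) := by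
      refine ih (by omega) _ fun p hp => ?_
      change x p - y p = 0
      by_cases hsucc : j.succ ∈ Set.range p.1.2.toOrderHom
      · have hcover : p.CoversUpTo (m + 1) := fun t ht =>
          (Nat.lt_or_eq_of_le ht).elim (fun h => hp t (by omega))
            fun h => (Fin.ext h : t = j.succ) ▸ hsucc
        rw [hx p hcover, hy_def, DKu_apply_of_mem_range j _ p (hp _ le_rfl) hsucc, sub_zero]
      · rw [hy_def, DKu_DKpull_δ_apply_of_not_mem_range j x p hsucc, sub_self]
    simpa using add_mem hy hxy

theorem mem_Dsub_iff {n : ℕ} {x : DK Y n} : x ∈ Dsub Y n ↔ x (DKIdx.id n) = 0 :=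
  ⟨apply_id_eq_zero_of_mem_Dsub, fun hx => mem_Dsub_of_forall_coversUpTo n le_rfl x fun p hp => by
    rwa [DKIdx.eq_id_of_surjective p fun t => hp t (Nat.lt_succ_iff.mp t.isLt)]⟩

lemma DKprime_id (n : ℕ) : DKprime (𝟙 (mk n)) = 𝟙 (mk (n + 1)) := by
  ext i : 3
  apply Fin.ext
  change (primeFun (OrderHom.id) i : ℕ) = i
  simp only [primeFun, OrderHom.coe_mk, OrderHom.id_coe, id_eq]
  split_ifs with h
  · exact h.symm
  · change (i : ℕ) - 1 + 1 = i
    omega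

lemma DKd0_apply_id (D : ∀ k, Y (k + 1) →+ Y k) {n : ℕ} (x : DK Y (n + 1)) :
    DKd0 Y D x (DKIdx.id n) = D n (x (DKIdx.id (n + 1))) -
      ∑ j : Fin (n + 1), ((-1 : ℤ) ^ ((j : ℕ) + 1)) •
        DKpull Y (δ j.succ) x (DKIdx.id n) := by
  change D n (DKproj Y (DKprime (𝟙 _)) x) -
      ∑ j : Fin (n + 1), _ • DKproj Y (δ j.succ ≫ DKprime (𝟙 _)) x = _
  simp only [DKprime_id, Category.comp_id, DKpull, Category.id_comp]
  rw [← DKproj_idx (DKIdx.id (n + 1)) x]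

end

theorem stmt11 (D : ∀ k, Y (k + 1) →+ Y k)
    (n : ℕ) (w : DK Y (n + 1))
    (hw : w ∈ Dsub Y (n + 1))
    (hd : ∀ i : Fin (n + 1), DKpull Y (SimplexCategory.δ i.succ) w ∈ Dsub Y n) :
    DKd0 Y D w ∈ Dsub Y n := by
  rw [mem_Dsub_iff, DKd0_apply_id, mem_Dsub_iff.mp hw, map_zero, zero_sub, neg_eq_zero]
  exact Finset.sum_eq_zero fun j _ => by rw [mem_Dsub_iff.mp (hd j), smul_zero]
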